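/- arXiv:quant-ph/0509167 — 4 statements merged into one kernel-verified Lean document; each statement's English description precedes it below -/
import Mathlib

section
/- Let V be a real symmetric positive-definite matrix indexed by a finite graph G=(L,E) such that V has range 2m (V_{i,j}=0 when dist(i,j)>m). Set a = λ_min(V), b = ‖V‖. Then for all i ≠ j, the (i,j) entry of V^{-1/2} satisfies |(V^{-1/2})_{i,j}| ≤ (√b / a) · (1 - a/b)^{dist(i,j)/m}, and for all i, |(V^{-1/2})_{i,i}| ≤ 1/√a. -/
open Finset

noncomputable def cb (n : ℕ) : ℝ := (Nat.centralBinom n : ℝ) / 4 ^ n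

lemma cb_zero : cb 0 = 1 := by simp [cb, Nat.centralBinom_zero]

lemma cb_nonneg (n : ℕ) : 0 ≤ cb n := div_nonneg (Nat.cast_nonneg _) (by positivity)

lemma cb_rec (n : ℕ) : ((n : ℝ) + 1) * cb (n + 1) = ((n : ℝ) + 1 / 2) * cb n := by
  have h := Nat.succ_mul_centralBinom_succ n
  have h' : ((n : ℝ) + 1) * (Nat.centralBinom (n + 1) : ℝ)
      = 2 * (2 * n + 1) * (Nat.centralBinom n : ℝ) := by
    exact_mod_cast congrArg (Nat.cast : ℕ → ℝ) h
  have h4 : (4 : ℝ) ^ (n + 1) = 4 * 4 ^ n := by ring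
  have hp : (0:ℝ) < 4 ^ n := by positivity
  rw [cb, cb, h4]
  field_simp
  nlinarith [h']

lemma cb_le_one (n : ℕ) : cb n ≤ 1 := by
  induction n with
  | zero => simp [cb_zero]
  | succ n ih =>
    have h := cb_rec n
    have hn : (0:ℝ) < n + 1 := by positivity
    have : cb (n+1) = ((n : ℝ) + 1/2) / (n + 1) * cb n := by
      field_simp at h ⊢; linarith [h]
    rw [this]
    have h1 : ((n : ℝ) + 1/2) / (n + 1) ≤ 1 := by
      rw [div_le_one hn]; linarith
    have := cb_nonneg n
    nlinarith

/-- The convolution identity `∑_{i+j=n} cb i * cb j = 1`. -/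
lemma cb_conv (n : ℕ) : ∑ p ∈ antidiagonal n, cb p.1 * cb p.2 = 1 := by
  induction n with
  | zero => simp [cb_zero]
  | succ n ih =>
    -- key : ∀ N, 2 * ∑ p in antidiagonal N, p.1 * (cb p.1 * cb p.2) = N * s N
    have key : ∀ N : ℕ, 2 * ∑ p ∈ antidiagonal N, (p.1 : ℝ) * (cb p.1 * cb p.2)
        = (N : ℝ) * ∑ p ∈ antidiagonal N, cb p.1 * cb p.2 := by
      intro N
      have hswap : ∑ p ∈ antidiagonal N, (p.1 : ℝ) * (cb p.1 * cb p.2)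
          = ∑ p ∈ antidiagonal N, (p.2 : ℝ) * (cb p.1 * cb p.2) := by
        rw [← Finset.HasAntidiagonal.map_swap_antidiagonal (n := N), Finset.sum_map]
        simp [mul_comm (cb _) (cb _)]
      calc 2 * ∑ p ∈ antidiagonal N, (p.1 : ℝ) * (cb p.1 * cb p.2)
          = ∑ p ∈ antidiagonal N, (((p.1 : ℝ) + p.2) * (cb p.1 * cb p.2)) := by
            rw [two_mul]; nth_rewrite 2 [hswap]; rw [← Finset.sum_add_distrib]
            apply Finset.sum_congr rfl; intro p _; ring
        _ = (N : ℝ) * ∑ p ∈ antidiagonal N, cb p.1 * cb p.2 := by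
            rw [Finset.mul_sum]
            apply Finset.sum_congr rfl; intro p hp
            have : p.1 + p.2 = N := Finset.HasAntidiagonal.mem_antidiagonal.mp hp
            rw [← this]; push_cast; ring
    -- shift identity
    have hshift : ∑ p ∈ antidiagonal (n+1), (p.1 : ℝ) * (cb p.1 * cb p.2)
        = ∑ p ∈ antidiagonal n, ((p.1 : ℝ) + 1) * (cb (p.1 + 1) * cb p.2) := by
      rw [Finset.Nat.antidiagonal_succ, Finset.sum_cons, Finset.sum_map]
      simp
    have hmain : ((n : ℝ) + 1) * ∑ p ∈ antidiagonal (n+1), cb p.1 * cb p.2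
        = ((n : ℝ) + 1) * ∑ p ∈ antidiagonal n, cb p.1 * cb p.2 := by
      have k1 := key (n+1)
      push_cast at k1
      rw [← k1, hshift]
      have : ∑ p ∈ antidiagonal n, ((p.1 : ℝ) + 1) * (cb (p.1 + 1) * cb p.2)
          = ∑ p ∈ antidiagonal n, ((p.1 : ℝ) + 1/2) * (cb p.1 * cb p.2) := by
        apply Finset.sum_congr rfl; intro p _
        rw [← mul_assoc, cb_rec p.1, mul_assoc]
      rw [this]
      have hsplit : ∑ p ∈ antidiagonal n, ((p.1 : ℝ) + 1/2) * (cb p.1 * cb p.2)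
          = (∑ p ∈ antidiagonal n, (p.1 : ℝ) * (cb p.1 * cb p.2))
            + (1/2) * ∑ p ∈ antidiagonal n, cb p.1 * cb p.2 := by
        rw [Finset.mul_sum, ← Finset.sum_add_distrib]
        apply Finset.sum_congr rfl; intro p _; ring
      rw [hsplit]
      have := key n
      linarith
    have hne : ((n : ℝ) + 1) ≠ 0 := by positivity
    have := mul_left_cancel₀ hne hmain
    rw [this, ih]

lemma cb_summable {t : ℝ} (h0 : 0 ≤ t) (h1 : t < 1) : Summable (fun n => cb n * t ^ n) := by
  refine Summable.of_nonneg_of_le (fun n => mul_nonneg (cb_nonneg n) (pow_nonneg h0 n))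
    (fun n => ?_) (summable_geometric_of_lt_one h0 h1)
  calc cb n * t ^ n ≤ 1 * t ^ n := by
        apply mul_le_mul_of_nonneg_right (cb_le_one n) (pow_nonneg h0 n)
    _ = t ^ n := one_mul _

lemma cb_tsum {t : ℝ} (h0 : 0 ≤ t) (h1 : t < 1) :
    ∑' n, cb n * t ^ n = (Real.sqrt (1 - t))⁻¹ := by
  have hsum := cb_summable h0 h1
  have hnorm : Summable (fun n => ‖cb n * t ^ n‖) := by
    have : ∀ n, ‖cb n * t ^ n‖ = cb n * t ^ n := fun n =>
      Real.norm_of_nonneg (mul_nonneg (cb_nonneg n) (pow_nonneg h0 n))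
    simpa [this] using hsum
  have hsq : (∑' n, cb n * t ^ n) * (∑' n, cb n * t ^ n) = (1 - t)⁻¹ := by
    rw [tsum_mul_tsum_eq_tsum_sum_range_of_summable_norm hnorm hnorm]
    have : ∀ n : ℕ, ∑ k ∈ range (n + 1), (cb k * t ^ k) * (cb (n - k) * t ^ (n - k))
        = t ^ n := by
      intro n
      have := cb_conv n
      rw [Finset.Nat.sum_antidiagonal_eq_sum_range_succ_mk] at this
      calc ∑ k ∈ range (n + 1), (cb k * t ^ k) * (cb (n - k) * t ^ (n - k))
          = ∑ k ∈ range (n + 1), (cb k * cb (n - k)) * t ^ n := by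
            apply Finset.sum_congr rfl; intro k hk
            have hk' : k ≤ n := Nat.lt_succ_iff.mp (Finset.mem_range.mp hk)
            rw [show (cb k * t ^ k) * (cb (n - k) * t ^ (n - k))
                = (cb k * cb (n - k)) * (t ^ k * t ^ (n - k)) by ring,
              ← pow_add, Nat.add_sub_cancel' hk']
        _ = t ^ n := by rw [← Finset.sum_mul, this, one_mul]
    rw [tsum_congr this, tsum_geometric_of_lt_one h0 h1]
  have hS : (0:ℝ) ≤ ∑' n, cb n * t ^ n :=
    tsum_nonneg (fun n => mul_nonneg (cb_nonneg n) (pow_nonneg h0 n))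
  have h1t : (0:ℝ) < 1 - t := by linarith
  have : (∑' n, cb n * t ^ n) = Real.sqrt ((1 - t)⁻¹) := by
    rw [← hsq, Real.sqrt_mul_self hS]
  rw [this, Real.sqrt_inv]

set_option maxHeartbeats 1000000 in
lemma cb_tail {t : ℝ} (h0 : 0 ≤ t) (h1 : t < 1) (k : ℕ) :
    0 ≤ (Real.sqrt (1 - t))⁻¹ - ∑ n ∈ range (k + 1), cb n * t ^ n ∧
    (Real.sqrt (1 - t))⁻¹ - ∑ n ∈ range (k + 1), cb n * t ^ n ≤ t ^ (k + 1) / (1 - t) := by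
  have hsum := cb_summable h0 h1
  have hsplit : (∑ n ∈ range (k + 1), cb n * t ^ n)
      + (∑' n, cb (n + (k + 1)) * t ^ (n + (k + 1))) = ∑' n, cb n * t ^ n := by
    exact_mod_cast Summable.sum_add_tsum_nat_add (f := fun n => cb n * t ^ n) (k + 1) hsum
  have htail : (Real.sqrt (1 - t))⁻¹ - ∑ n ∈ range (k + 1), cb n * t ^ n
      = ∑' n, cb (n + (k + 1)) * t ^ (n + (k + 1)) := by
    rw [← cb_tsum h0 h1, ← hsplit]; ring
  have hts : Summable (fun n => cb (n + (k + 1)) * t ^ (n + (k + 1))) :=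
    (summable_nat_add_iff (k + 1)).mpr hsum
  constructor
  · rw [htail]
    exact tsum_nonneg (fun n => mul_nonneg (cb_nonneg _) (pow_nonneg h0 _))
  · rw [htail]
    have hmaj : Summable (fun n : ℕ => t ^ (n + (k + 1))) := by
      simpa [pow_add] using (summable_geometric_of_lt_one h0 h1).mul_right (t ^ (k + 1))
    have hle : ∀ n : ℕ, cb (n + (k + 1)) * t ^ (n + (k + 1)) ≤ t ^ (n + (k + 1)) := by
      intro n
      calc cb (n + (k+1)) * t ^ (n + (k+1)) ≤ 1 * t ^ (n + (k+1)) :=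
            mul_le_mul_of_nonneg_right (cb_le_one _) (pow_nonneg h0 _)
        _ = _ := one_mul _
    calc ∑' n, cb (n + (k + 1)) * t ^ (n + (k + 1)) ≤ ∑' n : ℕ, t ^ (n + (k + 1)) :=
          Summable.tsum_le_tsum hle hts hmaj
      _ = t ^ (k + 1) / (1 - t) := by
          simp only [pow_add]
          rw [tsum_mul_right, tsum_geometric_of_lt_one h0 h1]
          rw [inv_mul_eq_div]


open Finset Matrix

section FunCalc
variable {L : Type*} [Fintype L] [DecidableEq L]

noncomputable def Phi (U : Matrix L L ℝ) (ev : L → ℝ) (f : ℝ → ℝ) : Matrix L L ℝ :=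
  U * Matrix.diagonal (f ∘ ev) * Uᴴ

variable {U : Matrix L L ℝ} {ev : L → ℝ}

lemma Phi_mul (hUU : Uᴴ * U = 1) (f g : ℝ → ℝ) :
    Phi U ev f * Phi U ev g = Phi U ev (fun x => f x * g x) := by
  simp only [Phi]
  rw [show U * diagonal (f ∘ ev) * Uᴴ * (U * diagonal (g ∘ ev) * Uᴴ)
      = U * diagonal (f ∘ ev) * (Uᴴ * U) * (diagonal (g ∘ ev) * Uᴴ) by
        simp only [Matrix.mul_assoc],
    hUU, Matrix.mul_one, Matrix.mul_assoc, ← Matrix.mul_assoc (diagonal (f ∘ ev)),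
    diagonal_mul_diagonal, ← Matrix.mul_assoc]
  rfl

lemma Phi_one (hUU' : U * Uᴴ = 1) : Phi U ev (fun _ => 1) = 1 := by
  simp only [Phi]
  have h1 : Matrix.diagonal ((fun _ => (1:ℝ)) ∘ ev) = 1 := Matrix.diagonal_one
  rw [h1, Matrix.mul_one, hUU']

lemma Phi_add (f g : ℝ → ℝ) :
    Phi U ev f + Phi U ev g = Phi U ev (fun x => f x + g x) := by
  simp only [Phi]
  rw [← Matrix.add_mul, ← Matrix.mul_add, Matrix.diagonal_add]
  rfl

lemma Phi_sub (f g : ℝ → ℝ) :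
    Phi U ev f - Phi U ev g = Phi U ev (fun x => f x - g x) := by
  simp only [Phi]
  rw [← Matrix.sub_mul, ← Matrix.mul_sub, Matrix.diagonal_sub]
  rfl

lemma Phi_smul (c : ℝ) (f : ℝ → ℝ) :
    c • Phi U ev f = Phi U ev (fun x => c * f x) := by
  simp only [Phi]
  have h : ((fun x => c * f x) ∘ ev) = c • (f ∘ ev) := rfl
  rw [h, Matrix.diagonal_smul, Matrix.mul_smul, Matrix.smul_mul]

lemma Phi_congr {f g : ℝ → ℝ} (h : ∀ v, f (ev v) = g (ev v)) :
    Phi U ev f = Phi U ev g := by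
  have : f ∘ ev = g ∘ ev := funext h
  simp only [Phi, this]

lemma Phi_pow (hUU : Uᴴ * U = 1) (hUU' : U * Uᴴ = 1) (f : ℝ → ℝ) (n : ℕ) :
    (Phi U ev f) ^ n = Phi U ev (fun x => f x ^ n) := by
  induction n with
  | zero =>
    rw [pow_zero, ← Phi_one (ev := ev) hUU']
    exact (Phi_congr (fun v => by rw [pow_zero])).symm
  | succ n ih =>
    rw [pow_succ, ih, Phi_mul hUU]
    exact Phi_congr (fun v => by ring)

lemma Phi_zero : Phi U ev (fun _ => 0) = 0 := by
  simp only [Phi]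
  have h : Matrix.diagonal ((fun _ => (0:ℝ)) ∘ ev) = 0 := Matrix.diagonal_zero
  rw [h, Matrix.mul_zero, Matrix.zero_mul]

lemma Phi_polysum (hUU : Uᴴ * U = 1) (hUU' : U * Uᴴ = 1) (c : ℕ → ℝ) (g : ℝ → ℝ) (K : ℕ) :
    ∑ n ∈ Finset.range K, c n • (Phi U ev g) ^ n
      = Phi U ev (fun x => ∑ n ∈ Finset.range K, c n * g x ^ n) := by
  induction K with
  | zero =>
    rw [Finset.sum_range_zero, ← Phi_zero (U := U) (ev := ev)]
    exact (Phi_congr (fun v => by rw [Finset.sum_range_zero])).symm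
  | succ K ih =>
    rw [Finset.sum_range_succ, ih, Phi_pow hUU hUU', Phi_smul, Phi_add]
    exact Phi_congr (fun v => by rw [Finset.sum_range_succ])

lemma Phi_posSemidef (hev : ∀ v, 0 ≤ ev v) (f : ℝ → ℝ) (hf : ∀ x, 0 ≤ x → 0 ≤ f x) :
    (Phi U ev f).PosSemidef := by
  apply Matrix.PosSemidef.mul_mul_conjTranspose_same
  refine Matrix.posSemidef_diagonal_iff.mpr fun v => hf _ (hev v)

lemma Phi_entry (f : ℝ → ℝ) (i j : L) :
    Phi U ev f i j = ∑ v, U i v * f (ev v) * U j v := by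
  calc Phi U ev f i j = ∑ v, U i v * ((Matrix.diagonal (f ∘ ev) * Uᴴ) v j) := by
        rw [Phi, Matrix.mul_assoc, Matrix.mul_apply]
    _ = ∑ v, U i v * f (ev v) * U j v := by
        apply Finset.sum_congr rfl; intro v _
        rw [Matrix.diagonal_mul, Matrix.conjTranspose_apply, star_trivial]
        simp only [Function.comp]; ring

lemma Phi_entry_bound [Nonempty L] (hUU' : U * Uᴴ = 1) {f : ℝ → ℝ} {C : ℝ}
    (hf : ∀ v, |f (ev v)| ≤ C) (i j : L) : |Phi U ev f i j| ≤ C := by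
  have hC : 0 ≤ C := le_trans (abs_nonneg _) (hf (Classical.arbitrary L))
  have hrow : ∀ l : L, ∑ v, U l v ^ 2 = 1 := by
    intro l
    have h1 : (U * Uᴴ) l l = (1 : Matrix L L ℝ) l l := by rw [hUU']
    simp only [Matrix.mul_apply, Matrix.conjTranspose_apply, star_trivial,
      Matrix.one_apply_eq] at h1
    rw [← h1]
    exact Finset.sum_congr rfl fun v _ => pow_two _
  rw [Phi_entry]
  calc |∑ v, U i v * f (ev v) * U j v| ≤ ∑ v, |U i v * f (ev v) * U j v| :=
        Finset.abs_sum_le_sum_abs _ _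
    _ ≤ ∑ v, C * (|U i v| * |U j v|) := by
        apply Finset.sum_le_sum; intro v _
        rw [abs_mul, abs_mul]
        calc |U i v| * |f (ev v)| * |U j v| ≤ |U i v| * C * |U j v| := by
              apply mul_le_mul_of_nonneg_right _ (abs_nonneg _)
              exact mul_le_mul_of_nonneg_left (hf v) (abs_nonneg _)
          _ = C * (|U i v| * |U j v|) := by ring
    _ = C * ∑ v, |U i v| * |U j v| := by rw [Finset.mul_sum]
    _ ≤ C * 1 := by
        apply mul_le_mul_of_nonneg_left _ hC
        have hcs := Finset.sum_mul_sq_le_sq_mul_sq Finset.univ (fun v => |U i v|)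
          (fun v => |U j v|)
        have h1 : ∑ v, |U i v| ^ 2 = 1 := by
          rw [← hrow i]; exact Finset.sum_congr rfl fun v _ => sq_abs _
        have h2 : ∑ v, |U j v| ^ 2 = 1 := by
          rw [← hrow j]; exact Finset.sum_congr rfl fun v _ => sq_abs _
        rw [h1, h2, mul_one] at hcs
        have hnn : 0 ≤ ∑ v, |U i v| * |U j v| :=
          Finset.sum_nonneg fun v _ => mul_nonneg (abs_nonneg _) (abs_nonneg _)
        nlinarith
    _ = C := mul_one C

end FunCalc

open Finset Matrix

/-- The ℓ² operator norm of a real matrix. -/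
noncomputable def opNorm {n : Type*} [Fintype n] [DecidableEq n] (M : Matrix n n ℝ) : ℝ :=
  ‖(Matrix.toEuclideanCLM (𝕜 := ℝ) M)‖

/-- If `V` is real symmetric positive definite of range `2m` on a finite
connected graph (`V i j = 0` when `dist i j > m`), `a = λ_min(V)`, `b = ‖V‖`, then the
entries of `W = V^{-1/2}` satisfy `|W i j| ≤ (√b/a) (1-a/b)^{dist(i,j)/m}` for `i ≠ j`,
and `|W i i| ≤ 1/√a`. -/
theorem invsqrt_entry_decay {L : Type*} [Fintype L] [DecidableEq L] [Nonempty L]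
    (G : SimpleGraph L) (hG : G.Connected)
    (V W : Matrix L L ℝ) (hV : V.PosDef) (hVsym : V.IsHermitian)
    (m : ℕ) (hm : 0 < m)
    (hrange : ∀ i j : L, (m : ℝ) < (G.dist i j : ℝ) → V i j = 0)
    (hW : W.PosDef) (hWinvsq : W * W = V⁻¹)
    (a b : ℝ) (ha : a = ⨅ i, hVsym.eigenvalues i) (hb : b = opNorm V) :
    (∀ i j : L, i ≠ j →
        |W i j| ≤ (Real.sqrt b / a) * (1 - a / b) ^ ((G.dist i j : ℝ) / (m : ℝ))) ∧
    (∀ i : L, |W i i| ≤ 1 / Real.sqrt a) := by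
  classical
  set U : Matrix L L ℝ := (hVsym.eigenvectorUnitary : Matrix L L ℝ) with hUdef
  set ev : L → ℝ := hVsym.eigenvalues with hevdef
  have hUmem := hVsym.eigenvectorUnitary.2
  have hUU' : U * Uᴴ = 1 := by
    rw [← Matrix.star_eq_conjTranspose]
    exact (Matrix.mem_unitaryGroup_iff).mp hUmem
  have hUU : Uᴴ * U = 1 := by
    rw [← Matrix.star_eq_conjTranspose]
    exact (Matrix.mem_unitaryGroup_iff').mp hUmem
  -- spectral theorem
  have hspec : V = Phi U ev (fun x => x) := by
    have h := hVsym.spectral_theorem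
    rw [h, Phi, Unitary.conjStarAlgAut_apply, Matrix.star_eq_conjTranspose]
    congr 1
  -- eigenvalue facts
  have hevpos : ∀ v, 0 < ev v := fun v => hV.eigenvalues_pos v
  have hbdd : BddBelow (Set.range hVsym.eigenvalues) :=
    (Set.finite_range _).bddBelow
  have hale : ∀ v, a ≤ ev v := fun v => ha ▸ ciInf_le hbdd v
  obtain ⟨v₀, hv₀⟩ : ∃ v₀, ∀ v, ev v₀ ≤ ev v := Finite.exists_min ev
  have ha_eq : a = ev v₀ := le_antisymm (hale v₀) (ha ▸ le_ciInf hv₀)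
  have hapos : 0 < a := ha_eq ▸ hevpos v₀
  -- eigenvalues are at most the operator norm
  have hevle : ∀ v, ev v ≤ b := by
    intro v
    set x : EuclideanSpace ℝ L := hVsym.eigenvectorBasis v with hxdef
    have hx1 : ‖x‖ = 1 := hVsym.eigenvectorBasis.orthonormal.1 v
    have hmv : V *ᵥ ⇑x = ev v • ⇑x := hVsym.mulVec_eigenvectorBasis v
    have hclm := Matrix.toEuclideanCLM_toLp (𝕜 := ℝ) V (⇑x)
    have h2 : Matrix.toEuclideanCLM (𝕜 := ℝ) V x = ev v • x := by
      have heq : WithLp.toLp 2 (⇑x) = x := rfl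
      rw [heq] at hclm
      rw [hclm, hmv]
      rfl
    have h3 := (Matrix.toEuclideanCLM (𝕜 := ℝ) V).le_opNorm x
    rw [h2, norm_smul, hx1, mul_one, mul_one] at h3
    calc ev v ≤ |ev v| := le_abs_self _
      _ = ‖ev v‖ := rfl
      _ ≤ ‖Matrix.toEuclideanCLM (𝕜 := ℝ) V‖ := h3
      _ = b := by rw [hb, opNorm]
  have hab : a ≤ b := le_of_eq_of_le ha_eq (hevle v₀)
  have hbpos : 0 < b := lt_of_lt_of_le hapos hab
  -- identify W as Phi of the inverse square root
  set f : ℝ → ℝ := fun x => (Real.sqrt x)⁻¹ with hfdef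
  have hPhiPSD : (Phi U ev f).PosSemidef :=
    Phi_posSemidef (fun v => (hevpos v).le) f (fun x _ => inv_nonneg.mpr (Real.sqrt_nonneg x))
  have hVinv : V⁻¹ = Phi U ev (fun x => x⁻¹) := by
    apply Matrix.inv_eq_right_inv
    rw [hspec]
    calc Phi U ev (fun x => x) * Phi U ev (fun x => x⁻¹)
        = Phi U ev (fun x => x * x⁻¹) := Phi_mul hUU _ _
      _ = Phi U ev (fun _ => 1) := Phi_congr (fun v => mul_inv_cancel₀ (hevpos v).ne')
      _ = 1 := Phi_one hUU'
  have hWPhi : W = Phi U ev f := by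
    open scoped MatrixOrder in apply (CFC.sq_eq_sq_iff W (Phi U ev f) hW.posSemidef.nonneg hPhiPSD.nonneg).mp
    rw [sq, sq, hWinvsq, hVinv, Phi_mul hUU]
    exact Phi_congr fun v => by
      rw [← mul_inv, Real.mul_self_sqrt (hevpos v).le]
  constructor
  · -- off-diagonal decay
    intro i j hij
    set d : ℕ := G.dist i j with hddef
    have hd : 0 < d := hG.pos_dist_of_ne hij
    set k : ℕ := (d - 1) / m with hkdef
    have hkm : k * m < d := by
      have h1 : k * m ≤ d - 1 := by rw [hkdef]; exact Nat.div_mul_le_self _ _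
      exact lt_of_le_of_lt h1 (Nat.sub_lt hd one_pos)
    have hdm : (d : ℝ) / m ≤ (k + 1 : ℕ) := by
      have h1 : d - 1 < m * (k + 1) := by rw [hkdef]; exact Nat.lt_mul_div_succ (d - 1) hm
      have h2 : d ≤ m * (k + 1) := by
        have := Nat.succ_le_of_lt h1
        rwa [← Nat.succ_pred_eq_of_pos hd]
      rw [div_le_iff₀ (by exact_mod_cast hm)]
      calc (d : ℝ) ≤ (m * (k + 1) : ℕ) := by exact_mod_cast h2
        _ = ((k + 1 : ℕ) : ℝ) * m := by push_cast; ring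
    -- the polynomial approximant
    set α : ℝ → ℝ := fun x => 1 - b⁻¹ * x with hαdef
    set A : Matrix L L ℝ := (1 : Matrix L L ℝ) - b⁻¹ • V with hAdef
    have hAPhi : A = Phi U ev α := by
      rw [hAdef, hspec, Phi_smul, ← Phi_one (ev := ev) hUU', Phi_sub]
    -- entries of A vanish beyond range m, and of A^n beyond n*m
    have hAzero : ∀ x y : L, (m : ℝ) < (G.dist x y : ℝ) → A x y = 0 := by
      intro x y hxy
      have hne : x ≠ y := by
        intro h; subst h
        rw [SimpleGraph.dist_self] at hxy
        exact absurd hxy (by push_cast; exact_mod_cast (Nat.cast_nonneg m).not_gt)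
      rw [hAdef, Matrix.sub_apply, Matrix.smul_apply, Matrix.one_apply_ne hne,
        hrange x y hxy]
      simp
    have hApow : ∀ n : ℕ, ∀ x y : L, (n * m : ℝ) < (G.dist x y : ℝ) → (A ^ n) x y = 0 := by
      intro n
      induction n with
      | zero =>
        intro x y hxy
        have hne : x ≠ y := by
          intro h; subst h
          rw [SimpleGraph.dist_self] at hxy
          norm_num at hxy
        rw [pow_zero, Matrix.one_apply_ne hne]
      | succ n ih =>
        intro x y hxy
        rw [pow_succ, Matrix.mul_apply]
        apply Finset.sum_eq_zero
        intro l _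
        by_cases hl : (n * m : ℝ) < (G.dist x l : ℝ)
        · rw [ih x l hl, zero_mul]
        · push_neg at hl
          have htri : G.dist x y ≤ G.dist x l + G.dist l y := hG.dist_triangle
          have hly : (m : ℝ) < (G.dist l y : ℝ) := by
            have h1 : ((n + 1 : ℕ) * m : ℝ) < (G.dist x y : ℝ) := by exact_mod_cast hxy
            have h2 : (G.dist x y : ℝ) ≤ (G.dist x l : ℝ) + (G.dist l y : ℝ) := by
              exact_mod_cast htri
            push_cast at h1
            linarith
          rw [hAzero l y hly, mul_zero]
    -- the approximating polynomial as a function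
    set q : ℝ → ℝ := fun x => (Real.sqrt b)⁻¹ * ∑ n ∈ Finset.range (k + 1),
      cb n * (1 - b⁻¹ * x) ^ n with hqdef
    have hPq : Phi U ev q = (Real.sqrt b)⁻¹ •
        ∑ n ∈ Finset.range (k + 1), cb n • A ^ n := by
      rw [hAPhi]
      rw [Phi_polysum hUU hUU' cb α (k + 1), Phi_smul]
    have hPqzero : Phi U ev q i j = 0 := by
      rw [hPq, Matrix.smul_apply, Matrix.sum_apply]
      rw [Finset.sum_eq_zero, smul_zero]
      intro n hn
      have hnk : n ≤ k := Nat.lt_succ_iff.mp (Finset.mem_range.mp hn)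
      have hnm : (n * m : ℝ) < (G.dist i j : ℝ) := by
        have : n * m < d := lt_of_le_of_lt (Nat.mul_le_mul_right m hnk) hkm
        exact_mod_cast this
      rw [Matrix.smul_apply, hApow n i j hnm, smul_zero]
    -- scalar estimate
    set r : ℝ := 1 - a / b with hrdef
    have hr0 : 0 ≤ r := by
      have h : a / b ≤ 1 := (div_le_one hbpos).mpr hab
      rw [hrdef]; linarith
    have hr1 : r < 1 := by
      have h : 0 < a / b := div_pos hapos hbpos
      rw [hrdef]; linarith
    have hsb : 0 < Real.sqrt b := Real.sqrt_pos.mpr hbpos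
    have hsbinv : (0:ℝ) ≤ (Real.sqrt b)⁻¹ := inv_nonneg.mpr (Real.sqrt_nonneg b)
    have hscalar : ∀ v, |f (ev v) - q (ev v)| ≤ (Real.sqrt b / a) * r ^ (k + 1) := by
      intro v
      have hlpos : 0 < ev v := hevpos v
      have hla : a ≤ ev v := hale v
      have hlb : ev v ≤ b := hevle v
      set t : ℝ := 1 - ev v / b with htdef
      have ht0 : 0 ≤ t := by
        have h : ev v / b ≤ 1 := (div_le_one hbpos).mpr hlb
        rw [htdef]; linarith
      have ht1 : t < 1 := by
        have h : 0 < ev v / b := div_pos hlpos hbpos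
        rw [htdef]; linarith
      have htr : t ≤ r := by
        have h : a / b ≤ ev v / b := by gcongr
        rw [htdef, hrdef]; linarith
      have h1t : 1 - t = ev v / b := by rw [htdef]; ring
      have h1tpos : 0 < 1 - t := by linarith
      have hqv : q (ev v) = (Real.sqrt b)⁻¹ *
          ∑ n ∈ Finset.range (k + 1), cb n * t ^ n := by
        have h0 : q (ev v) = (Real.sqrt b)⁻¹ *
            ∑ n ∈ Finset.range (k + 1), cb n * (1 - b⁻¹ * ev v) ^ n := rfl
        have heq : 1 - b⁻¹ * ev v = t := by rw [htdef]; ring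
        rw [h0, heq]
      have hfv : f (ev v) = (Real.sqrt b)⁻¹ * (Real.sqrt (1 - t))⁻¹ := by
        have hb1t : b * (1 - t) = ev v := by rw [h1t]; field_simp
        rw [show f (ev v) = (Real.sqrt (ev v))⁻¹ from rfl, ← hb1t,
          Real.sqrt_mul hbpos.le, mul_inv]
      obtain ⟨hlow, hup⟩ := cb_tail ht0 ht1 k
      have hdiff : f (ev v) - q (ev v) = (Real.sqrt b)⁻¹ *
          ((Real.sqrt (1 - t))⁻¹ - ∑ n ∈ Finset.range (k + 1), cb n * t ^ n) := by
        rw [hfv, hqv]; ring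
      have habs : |f (ev v) - q (ev v)| = (Real.sqrt b)⁻¹ *
          ((Real.sqrt (1 - t))⁻¹ - ∑ n ∈ Finset.range (k + 1), cb n * t ^ n) := by
        rw [hdiff, abs_of_nonneg (mul_nonneg hsbinv hlow)]
      have hstep : t ^ (k + 1) / (1 - t) ≤ r ^ (k + 1) * (b / a) := by
        have h1 : t ^ (k + 1) ≤ r ^ (k + 1) := pow_le_pow_left₀ ht0 htr _
        have h2 : a / b ≤ 1 - t := by rw [h1t]; gcongr
        have h3 : (1 - t)⁻¹ ≤ b / a := by
          rw [show b / a = (a / b)⁻¹ by rw [inv_div]]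
          exact inv_anti₀ (div_pos hapos hbpos) h2
        calc t ^ (k + 1) / (1 - t) = t ^ (k + 1) * (1 - t)⁻¹ := div_eq_mul_inv _ _
          _ ≤ r ^ (k + 1) * (b / a) :=
              mul_le_mul h1 h3 (inv_nonneg.mpr h1tpos.le) (pow_nonneg hr0 _)
      rw [habs]
      calc (Real.sqrt b)⁻¹ *
          ((Real.sqrt (1 - t))⁻¹ - ∑ n ∈ Finset.range (k + 1), cb n * t ^ n)
          ≤ (Real.sqrt b)⁻¹ * (t ^ (k + 1) / (1 - t)) :=
            mul_le_mul_of_nonneg_left hup hsbinv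
        _ ≤ (Real.sqrt b)⁻¹ * (r ^ (k + 1) * (b / a)) :=
            mul_le_mul_of_nonneg_left hstep hsbinv
        _ = r ^ (k + 1) * ((Real.sqrt b)⁻¹ * b) / a := by ring
        _ = (Real.sqrt b / a) * r ^ (k + 1) := by
            have hsbb : (Real.sqrt b)⁻¹ * b = Real.sqrt b := by
              rw [inv_mul_eq_div, div_eq_iff hsb.ne', Real.mul_self_sqrt hbpos.le]
            rw [hsbb]; ring
    -- conclude off-diagonal bound
    have hWij : W i j = Phi U ev (fun x => f x - q x) i j := by
      rw [← Phi_sub f q, Matrix.sub_apply, hPqzero, sub_zero, hWPhi]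
    have hb1 := Phi_entry_bound hUU' (f := fun x => f x - q x)
      (C := (Real.sqrt b / a) * r ^ (k + 1)) hscalar i j
    rw [hWij]
    refine le_trans hb1 ?_
    have hba : (0:ℝ) ≤ Real.sqrt b / a := div_nonneg (Real.sqrt_nonneg b) hapos.le
    have hpow : r ^ (k + 1) ≤ r ^ ((d : ℝ) / (m : ℝ)) := by
      rcases eq_or_lt_of_le hr0 with h0 | h0
      · rw [← h0, zero_pow (Nat.succ_ne_zero k), Real.zero_rpow]
        have hd' : (0:ℝ) < (d : ℝ) / (m : ℝ) := by positivity
        exact hd'.ne'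
      · rw [← Real.rpow_natCast r (k + 1)]
        apply Real.rpow_le_rpow_of_exponent_ge h0 hr1.le
        exact_mod_cast hdm
    exact mul_le_mul_of_nonneg_left hpow hba
  · -- diagonal bound
    intro i
    rw [hWPhi]
    have hbound : ∀ v, |f (ev v)| ≤ (Real.sqrt a)⁻¹ := by
      intro v
      have h1 : Real.sqrt a ≤ Real.sqrt (ev v) := Real.sqrt_le_sqrt (hale v)
      have h2 : 0 < Real.sqrt a := Real.sqrt_pos.mpr hapos
      rw [hfdef, abs_of_nonneg (inv_nonneg.mpr (Real.sqrt_nonneg _))]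
      exact inv_anti₀ h2 h1
    calc |Phi U ev f i i| ≤ (Real.sqrt a)⁻¹ := Phi_entry_bound hUU' hbound i i
      _ = 1 / Real.sqrt a := (one_div _).symm
end

section
/- Let V be a real symmetric positive-definite matrix on a finite graph with dimension bound |S_r(i)| ≤ c·r^{d-1}, and suppose the entries of V^{-1/2} satisfy |(V^{-1/2})_{i,j}| ≤ K₀ for i=j and |(V^{-1/2})_{i,j}| ≤ K·dist(i,j)^{-η} for i≠j, with η>d. Then the smallest eigenvalue of V satisfies λ_min(V^{1/2}) ≥ 1/(K₀ + c·K·ζ(1+η-d)), equivalently the spectral gap ΔE = 2λ_min(V^{1/2}) ≥ 2/(K₀ + c·K·ζ(1+η-d)) > 0. -/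
/-!
Since `W R = 1`, the inverse `μ⁻¹` of each eigenvalue `μ > 0` of `R = V^{1/2}` is an eigenvalue of
`W`, so Gershgorin's circle theorem bounds it by `|W k k| + ∑_{j ≠ k} |W k j|` for some row `k`.
Grouping that row by the distance `r ≥ 1` from `k`, the sphere bound and the decay of `W` bound the
contribution of distance `r` by `c K r^{-(1 + η - d)}`, and these sum to at most `c K ζ(1 + η - d)`.
-/

open Finset Matrix Module.End

lemma riemannZeta_re_eq_tsum {s : ℝ} (hs : 1 < s) :
    (riemannZeta s).re = ∑' n : ℕ, 1 / (n : ℝ) ^ s := by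
  have hcast : ∀ n : ℕ, 1 / (n : ℂ) ^ (s : ℂ) = ((1 / (n : ℝ) ^ s : ℝ) : ℂ) := fun n => by
    rw [Complex.ofReal_div, Complex.ofReal_cpow (Nat.cast_nonneg n)]
    push_cast
    rfl
  rw [zeta_eq_tsum_one_div_nat_cpow (by simpa using hs), tsum_congr hcast, ← Complex.ofReal_tsum,
    Complex.ofReal_re]

lemma sum_Icc_rpow_neg_le_riemannZeta_re {s : ℝ} (hs : 1 < s) (N : ℕ) :
    ∑ r ∈ Icc 1 N, (r : ℝ) ^ (-s) ≤ (riemannZeta s).re := by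
  simp_rw [riemannZeta_re_eq_tsum hs, Real.rpow_neg (Nat.cast_nonneg _), ← one_div]
  exact (Real.summable_one_div_nat_rpow.mpr hs).sum_le_tsum _ fun n _ => by positivity

namespace SimpleGraph

variable {L : Type*} [Fintype L] [DecidableEq L] {G : SimpleGraph L} {i : L} {c d K η : ℝ}

lemma sum_abs_of_dist_eq_le (hsphere : ∀ r : ℕ, 1 ≤ r →
      ((univ.filter fun l : L => G.dist i l = r).card : ℝ) ≤ c * (r : ℝ) ^ (d - 1))
    (hK : 0 ≤ K) {f : L → ℝ} (hf : ∀ j, i ≠ j → |f j| ≤ K * (G.dist i j : ℝ) ^ (-η))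
    {r : ℕ} (hr : 1 ≤ r) :
    ∑ j ∈ (univ.erase i).filter (fun j => G.dist i j = r), |f j| ≤
      c * K * (r : ℝ) ^ (-(1 + η - d)) := by
  have hr₀ : (0 : ℝ) < r := by exact_mod_cast hr
  have hterm : ∀ j ∈ (univ.erase i).filter (fun j => G.dist i j = r),
      |f j| ≤ K * (r : ℝ) ^ (-η) := fun j hj => by
    rw [mem_filter, mem_erase] at hj
    simpa only [hj.2] using hf j (Ne.symm hj.1.1)
  have hcard : (((univ.erase i).filter fun j => G.dist i j = r).card : ℝ) ≤
      c * (r : ℝ) ^ (d - 1) :=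
    le_trans (by exact_mod_cast card_le_card (filter_subset_filter _ (erase_subset _ _)))
      (hsphere r hr)
  calc ∑ j ∈ (univ.erase i).filter (fun j => G.dist i j = r), |f j|
      ≤ ((univ.erase i).filter fun j => G.dist i j = r).card * (K * (r : ℝ) ^ (-η)) := by
        simpa only [sum_const, nsmul_eq_mul] using sum_le_sum hterm
    _ ≤ c * (r : ℝ) ^ (d - 1) * (K * (r : ℝ) ^ (-η)) := by gcongr
    _ = c * K * (r : ℝ) ^ (-(1 + η - d)) := by
        rw [mul_mul_mul_comm, mul_assoc, ← Real.rpow_add hr₀]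
        ring_nf

lemma sum_erase_abs_le_of_dist_decay (hG : G.Connected) (hsphere : ∀ r : ℕ, 1 ≤ r →
      ((univ.filter fun l : L => G.dist i l = r).card : ℝ) ≤ c * (r : ℝ) ^ (d - 1))
    (hc : 0 ≤ c) (hK : 0 ≤ K) (hη : d < η) {f : L → ℝ}
    (hf : ∀ j, i ≠ j → |f j| ≤ K * (G.dist i j : ℝ) ^ (-η)) :
    ∑ j ∈ univ.erase i, |f j| ≤ c * K * (riemannZeta (1 + η - d)).re := by
  set N := univ.sup (G.dist i)
  have hmaps : ∀ j ∈ univ.erase i, G.dist i j ∈ Icc 1 N := fun j hj =>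
    mem_Icc.mpr ⟨hG.pos_dist_of_ne (ne_of_mem_erase hj).symm, le_sup (mem_univ j)⟩
  calc ∑ j ∈ univ.erase i, |f j|
      = ∑ r ∈ Icc 1 N, ∑ j ∈ (univ.erase i).filter (fun j => G.dist i j = r), |f j| :=
        (sum_fiberwise_of_maps_to hmaps _).symm
    _ ≤ ∑ r ∈ Icc 1 N, c * K * (r : ℝ) ^ (-(1 + η - d)) :=
        sum_le_sum fun r hr => sum_abs_of_dist_eq_le hsphere hK hf (mem_Icc.mp hr).1
    _ = c * K * ∑ r ∈ Icc 1 N, (r : ℝ) ^ (-(1 + η - d)) := (mul_sum _ _ _).symm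
    _ ≤ c * K * (riemannZeta (1 + η - d)).re := by
        gcongr
        exact_mod_cast sum_Icc_rpow_neg_le_riemannZeta_re (by linarith) N

end SimpleGraph

namespace Matrix

variable {n : Type*} [Fintype n] [DecidableEq n]

lemma hasEigenvalue_inv_of_mul_eq_one {𝕜 : Type*} [Field 𝕜] {R W : Matrix n n 𝕜}
    (hWR : W * R = 1) {μ : 𝕜} {v : n → 𝕜} (hv : v ≠ 0) (hRv : R *ᵥ v = μ • v) :
    HasEigenvalue (toLin' W) μ⁻¹ := by
  have hv_eq : v = μ • W *ᵥ v := by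
    rw [← mulVec_smul, ← hRv, mulVec_mulVec, hWR, one_mulVec]
  have hμ : μ ≠ 0 := fun h => hv (by rwa [h, zero_smul] at hv_eq)
  refine hasEigenvalue_of_hasEigenvector ⟨mem_eigenspace_iff.mpr ?_, hv⟩
  rw [toLin'_apply]
  nth_rw 2 [hv_eq]
  rw [smul_smul, inv_mul_cancel₀ hμ, one_smul]

lemma norm_le_of_hasEigenvalue {𝕜 : Type*} [NormedField 𝕜] {A : Matrix n n 𝕜} {μ : 𝕜}
    (hμ : HasEigenvalue (toLin' A) μ) {B : ℝ}
    (hrow : ∀ k, ‖A k k‖ + ∑ j ∈ univ.erase k, ‖A k j‖ ≤ B) : ‖μ‖ ≤ B := by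
  obtain ⟨k, hk⟩ := eigenvalue_mem_ball hμ
  calc ‖μ‖ ≤ ‖A k k‖ + dist μ (A k k) := by
        rw [dist_eq_norm]
        exact norm_le_norm_add_norm_sub' μ (A k k)
    _ ≤ B := le_trans (add_le_add_right (Metric.mem_closedBall.mp hk) _) (hrow k)

lemma PosDef.inv_eigenvalues_le {R W : Matrix n n ℝ} (hR : R.PosDef) (hWR : W * R = 1)
    {B : ℝ} (hrow : ∀ k, |W k k| + ∑ j ∈ univ.erase k, |W k j| ≤ B) (i : n) :
    (hR.isHermitian.eigenvalues i)⁻¹ ≤ B := by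
  have hμ := hasEigenvalue_inv_of_mul_eq_one hWR
    ((WithLp.ofLp_eq_zero 2).ne.mpr (hR.isHermitian.eigenvectorBasis.orthonormal.ne_zero i))
    (hR.isHermitian.mulVec_eigenvectorBasis i)
  simpa only [Real.norm_eq_abs, abs_of_pos (inv_pos.mpr (hR.eigenvalues_pos i))] using
    norm_le_of_hasEigenvalue hμ hrow

end Matrix

theorem gap_from_algebraic_decay_general {L : Type*} [Fintype L] [DecidableEq L] [Nonempty L]
    (G : SimpleGraph L) (hG : G.Connected)
    (R W : Matrix L L ℝ)
    (hR : R.PosDef) (hRsym : R.IsHermitian)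
    (hWinv : W * R = 1)
    (c d : ℝ) (hc : 0 < c)
    (hsphere : ∀ i : L, ∀ r : ℕ, 1 ≤ r →
      ((Finset.univ.filter fun l : L => G.dist i l = r).card : ℝ) ≤ c * (r : ℝ) ^ (d - 1))
    (K₀ K η : ℝ) (hK : 0 ≤ K) (hη : d < η)
    (hdiag : ∀ i : L, |W i i| ≤ K₀)
    (hoff : ∀ i j : L, i ≠ j → |W i j| ≤ K * (G.dist i j : ℝ) ^ (-η)) :
    1 / (K₀ + c * K * (riemannZeta (1 + η - d)).re) ≤ ⨅ i, hRsym.eigenvalues i ∧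
    0 < 2 / (K₀ + c * K * (riemannZeta (1 + η - d)).re) ∧
    2 / (K₀ + c * K * (riemannZeta (1 + η - d)).re) ≤ 2 * ⨅ i, hRsym.eigenvalues i := by
  set B := K₀ + c * K * (riemannZeta (1 + η - d)).re
  have hrow (k : L) : |W k k| + ∑ j ∈ univ.erase k, |W k j| ≤ B :=
    add_le_add (hdiag k) (G.sum_erase_abs_le_of_dist_decay hG (hsphere k) hc.le hK hη (hoff k))
  have hinv : ∀ i, (hRsym.eigenvalues i)⁻¹ ≤ B := hR.inv_eigenvalues_le hWinv hrow
  have hB : 0 < B :=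
    (inv_pos.mpr (hR.eigenvalues_pos (Classical.arbitrary L))).trans_le (hinv _)
  have hgap : 1 / B ≤ ⨅ i, hRsym.eigenvalues i :=
    le_ciInf fun i => one_div B ▸ inv_le_of_inv_le₀ (hR.eigenvalues_pos i) (hinv i)
  refine ⟨hgap, by positivity, ?_⟩
  rw [← mul_one_div]
  exact mul_le_mul_of_nonneg_left hgap zero_le_two

/-- If `V` is real symmetric positive definite on a finite connected graph of
dimension `d`, and the inverse square root `W = V^{-1/2}` has entries bounded by `K₀` on the
diagonal and `K dist(i,j)^{-η}` off the diagonal (`η > d`), then the smallest eigenvalue of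
`R = V^{1/2}` satisfies `λ_min(V^{1/2}) ≥ 1/(K₀ + c K ζ(1+η-d))`; equivalently the gap
`ΔE = 2 λ_min(V^{1/2}) ≥ 2/(K₀ + c K ζ(1+η-d)) > 0`. -/
theorem gap_from_algebraic_decay {L : Type*} [Fintype L] [DecidableEq L] [Nonempty L]
    (G : SimpleGraph L) (hG : G.Connected)
    (V R W : Matrix L L ℝ) (hV : V.PosDef)
    (hR : R.PosDef) (hRsym : R.IsHermitian) (hRsq : R * R = V)
    (hWinv : W * R = 1)
    (c d : ℝ) (hc : 0 < c) (hd : 0 < d)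
    (hsphere : ∀ i : L, ∀ r : ℕ, 1 ≤ r →
      ((Finset.univ.filter fun l : L => G.dist i l = r).card : ℝ) ≤ c * (r : ℝ) ^ (d - 1))
    (K₀ K η : ℝ) (hK₀ : 0 ≤ K₀) (hK : 0 ≤ K) (hη : d < η)
    (hdiag : ∀ i : L, |W i i| ≤ K₀)
    (hoff : ∀ i j : L, i ≠ j → |W i j| ≤ K * (G.dist i j : ℝ) ^ (-η)) :
    1 / (K₀ + c * K * (riemannZeta (1 + η - d)).re) ≤ ⨅ i, hRsym.eigenvalues i ∧
    0 < 2 / (K₀ + c * K * (riemannZeta (1 + η - d)).re) ∧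
    2 / (K₀ + c * K * (riemannZeta (1 + η - d)).re) ≤ 2 * ⨅ i, hRsym.eigenvalues i :=
  gap_from_algebraic_decay_general G hG R W hR hRsym hWinv c d hc hsphere K₀ K η hK hη hdiag hoff
end

section
/- Let V be a real symmetric positive-definite matrix on a finite graph of dimension d (|S_r(i)| ≤ c·r^{d-1}) whose inverse square root satisfies |(V^{-1/2})_{i,j}| ≤ K·exp(-dist(i,j)/ξ) for all i,j and some K,ξ>0. Then λ_min(V^{1/2}) ≥ 1/(K·(1 + c·Li_{1-d}(e^{-1/ξ}))), where Li_{1-d}(x) = ∑_{r≥1} r^{d-1} x^r is the polylogarithm of order 1-d; in particular the spectral gap ΔE = 2λ_min(V^{1/2}) is bounded below by 2/(K(1+c·Li_{1-d}(e^{-1/ξ}))) > 0. -/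
/-- The polylogarithm `Li_{1-d}(x) = ∑_{r ≥ 1} r^{d-1} x^r`. -/
noncomputable def polyLog (d x : ℝ) : ℝ := ∑' r : ℕ, ((r : ℝ) + 1) ^ (d - 1) * x ^ (r + 1)

/-- If `V` is real symmetric positive definite on a finite connected graph of
dimension `d` and its inverse square root `W = V^{-1/2}` satisfies
`|W i j| ≤ K exp(-dist(i,j)/ξ)` for all `i, j`, then
`λ_min(V^{1/2}) ≥ 1/(K (1 + c Li_{1-d}(e^{-1/ξ})))`; in particular the spectral gap
`ΔE = 2 λ_min(V^{1/2}) ≥ 2/(K (1 + c Li_{1-d}(e^{-1/ξ}))) > 0`. -/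
theorem gap_from_exponential_decay {L : Type*} [Fintype L] [DecidableEq L] [Nonempty L]
    (G : SimpleGraph L) (hG : G.Connected)
    (V R W : Matrix L L ℝ) (hV : V.PosDef)
    (hR : R.PosDef) (hRsym : R.IsHermitian) (hRsq : R * R = V)
    (hWinv : W * R = 1)
    (c d : ℝ) (hc : 0 < c) (hd : 0 < d)
    (hsphere : ∀ i : L, ∀ r : ℕ, 1 ≤ r →
      ((Finset.univ.filter fun l : L => G.dist i l = r).card : ℝ) ≤ c * (r : ℝ) ^ (d - 1))
    (K ξ : ℝ) (hK : 0 < K) (hξ : 0 < ξ)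
    (hdecay : ∀ i j : L, |W i j| ≤ K * Real.exp (-(G.dist i j : ℝ) / ξ)) :
    1 / (K * (1 + c * polyLog d (Real.exp (-1 / ξ)))) ≤ ⨅ i, hRsym.eigenvalues i ∧
    0 < 2 / (K * (1 + c * polyLog d (Real.exp (-1 / ξ)))) ∧
    2 / (K * (1 + c * polyLog d (Real.exp (-1 / ξ)))) ≤ 2 * ⨅ i, hRsym.eigenvalues i := by
  set x : ℝ := Real.exp (-1 / ξ) with hxdef
  have hx0 : 0 < x := Real.exp_pos _
  have hx1 : x < 1 := by
    rw [hxdef]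
    apply Real.exp_lt_one_iff.mpr
    have h : (0:ℝ) < 1 / ξ := by positivity
    rw [neg_div]
    linarith
  -- summability of the polylog series
  obtain ⟨n, hn⟩ : ∃ n : ℕ, d - 1 ≤ n := exists_nat_ge (d - 1)
  have hsumm : Summable (fun r : ℕ => ((r : ℝ) + 1) ^ (d - 1) * x ^ (r + 1)) := by
    have h1 : Summable (fun r : ℕ => ((r : ℝ)) ^ n * x ^ r) :=
      summable_pow_mul_geometric_of_norm_lt_one (R := ℝ) n
        (r := x) (by rw [Real.norm_eq_abs, abs_of_pos hx0]; exact hx1)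
    have h2 : Summable (fun r : ℕ => ((r : ℝ) + 1) ^ n * x ^ (r + 1)) := by
      have := (summable_nat_add_iff 1).mpr h1
      refine this.congr fun r => ?_
      push_cast
      ring
    apply Summable.of_nonneg_of_le (fun r => by positivity) (fun r => ?_) h2
    have hb : (1:ℝ) ≤ (r : ℝ) + 1 := by
      have : (0:ℝ) ≤ (r:ℝ) := Nat.cast_nonneg r
      linarith
    have hpow : ((r : ℝ) + 1) ^ (d - 1) ≤ ((r : ℝ) + 1) ^ n := by
      rw [← Real.rpow_natCast ((r:ℝ)+1) n]
      exact Real.rpow_le_rpow_of_exponent_le hb hn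
    exact mul_le_mul_of_nonneg_right hpow (by positivity)
  have hLi0 : 0 ≤ polyLog d x := tsum_nonneg fun r => by positivity
  have hB : 0 < K * (1 + c * polyLog d x) := by positivity
  set B : ℝ := K * (1 + c * polyLog d x) with hBdef
  -- row sum bound
  have hrow : ∀ j : L, ∑ k : L, |W j k| ≤ B := by
    intro j
    have step1 : ∑ k : L, |W j k| ≤ K * ∑ k : L, Real.exp (-(G.dist j k : ℝ) / ξ) := by
      rw [Finset.mul_sum]
      exact Finset.sum_le_sum fun k _ => hdecay j k
    have step2 : ∑ k : L, Real.exp (-(G.dist j k : ℝ) / ξ) ≤ 1 + c * polyLog d x := by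
      set N := Fintype.card L with hN
      have hmaps : ∀ k ∈ Finset.univ.erase j, G.dist j k ∈ Finset.Icc 1 N := by
        intro k hk
        have hkj : j ≠ k := (Finset.ne_of_mem_erase hk).symm
        refine Finset.mem_Icc.mpr ⟨?_, ?_⟩
        · rcases Nat.eq_zero_or_pos (G.dist j k) with h | h
          · exact absurd (hG.dist_eq_zero_iff.mp h) hkj
          · exact h
        · obtain ⟨w⟩ := hG.preconnected j k
          exact (SimpleGraph.dist_le w.toPath.1).trans w.toPath.2.length_lt.le
      have hsplit : ∑ k : L, Real.exp (-(G.dist j k : ℝ) / ξ)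
          = Real.exp (-(G.dist j j : ℝ) / ξ)
            + ∑ k ∈ Finset.univ.erase j, Real.exp (-(G.dist j k : ℝ) / ξ) :=
        (Finset.add_sum_erase _ _ (Finset.mem_univ j)).symm
      have hjj : Real.exp (-(G.dist j j : ℝ) / ξ) = 1 := by
        simp [SimpleGraph.dist_self]
      have hfib : ∑ k ∈ Finset.univ.erase j, Real.exp (-(G.dist j k : ℝ) / ξ)
          = ∑ r ∈ Finset.Icc 1 N, ∑ k ∈ (Finset.univ.erase j).filter (fun k => G.dist j k = r),
              Real.exp (-(G.dist j k : ℝ) / ξ) :=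
        (Finset.sum_fiberwise_of_maps_to hmaps _).symm
      have hinner : ∀ r ∈ Finset.Icc 1 N,
          ∑ k ∈ (Finset.univ.erase j).filter (fun k => G.dist j k = r),
            Real.exp (-(G.dist j k : ℝ) / ξ) ≤ c * (r : ℝ) ^ (d - 1) * x ^ r := by
        intro r hr
        have hr1 : 1 ≤ r := (Finset.mem_Icc.mp hr).1
        have heq : ∀ k ∈ (Finset.univ.erase j).filter (fun k => G.dist j k = r),
            Real.exp (-(G.dist j k : ℝ) / ξ) = x ^ r := by
          intro k hk
          have hdk : G.dist j k = r := by
            simpa using (Finset.mem_filter.mp hk).2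
          rw [hdk, hxdef, ← Real.exp_nat_mul]
          congr 1
          ring
        rw [Finset.sum_congr rfl heq, Finset.sum_const, nsmul_eq_mul]
        have hcard : ((((Finset.univ.erase j).filter (fun k => G.dist j k = r)).card : ℝ))
            ≤ c * (r : ℝ) ^ (d - 1) := by
          refine le_trans ?_ (hsphere j r hr1)
          exact_mod_cast Finset.card_le_card
            (Finset.filter_subset_filter _ (Finset.erase_subset _ _))
        exact mul_le_mul_of_nonneg_right hcard (pow_nonneg hx0.le r)
      have htail : ∑ r ∈ Finset.Icc 1 N, c * (r : ℝ) ^ (d - 1) * x ^ r ≤ c * polyLog d x := by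
        have hfac : ∑ r ∈ Finset.Icc 1 N, c * (r : ℝ) ^ (d - 1) * x ^ r
            = c * ∑ r ∈ Finset.Icc 1 N, (r : ℝ) ^ (d - 1) * x ^ r := by
          rw [Finset.mul_sum]
          exact Finset.sum_congr rfl fun _ _ => by ring
        rw [hfac]
        refine mul_le_mul_of_nonneg_left ?_ hc.le
        rw [← Finset.Ico_add_one_right_eq_Icc, Finset.sum_Ico_eq_sum_range, Nat.add_sub_cancel]
        have hre : ∀ s ∈ Finset.range N,
            ((1 + s : ℕ) : ℝ) ^ (d - 1) * x ^ (1 + s) = ((s : ℝ) + 1) ^ (d - 1) * x ^ (s + 1) := by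
          intro s _
          rw [add_comm 1 s]
          push_cast
          ring_nf
        rw [Finset.sum_congr rfl hre]
        exact Summable.sum_le_tsum _ (fun r _ => by positivity) hsumm
      calc ∑ k : L, Real.exp (-(G.dist j k : ℝ) / ξ)
          = 1 + ∑ r ∈ Finset.Icc 1 N, ∑ k ∈ (Finset.univ.erase j).filter
              (fun k => G.dist j k = r), Real.exp (-(G.dist j k : ℝ) / ξ) := by
            rw [hsplit, hjj, hfib]
        _ ≤ 1 + ∑ r ∈ Finset.Icc 1 N, c * (r : ℝ) ^ (d - 1) * x ^ r :=
            add_le_add_right (Finset.sum_le_sum hinner) 1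
        _ ≤ 1 + c * polyLog d x := add_le_add_right htail 1
    calc ∑ k : L, |W j k| ≤ K * ∑ k : L, Real.exp (-(G.dist j k : ℝ) / ξ) := step1
      _ ≤ B := mul_le_mul_of_nonneg_left step2 hK.le
  -- eigenvalue bound
  have hmin : ∀ i : L, 1 / B ≤ hRsym.eigenvalues i := by
    intro i
    have hμpos : 0 < hRsym.eigenvalues i := hR.eigenvalues_pos i
    set μ := hRsym.eigenvalues i with hμ
    set v : L → ℝ := (WithLp.equiv 2 (L → ℝ)) (hRsym.eigenvectorBasis i) with hv
    have h1 : R.mulVec v = μ • v := hRsym.mulVec_eigenvectorBasis i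
    have h2 : μ • (W.mulVec v) = v := by
      calc μ • (W.mulVec v) = W.mulVec (μ • v) := (Matrix.mulVec_smul W μ v).symm
        _ = W.mulVec (R.mulVec v) := by rw [h1]
        _ = (W * R).mulVec v := Matrix.mulVec_mulVec v W R
        _ = v := by rw [hWinv, Matrix.one_mulVec]
    have hvne : v ≠ 0 := by
      have := hRsym.eigenvectorBasis.orthonormal.ne_zero i
      intro hcontra
      apply this
      ext k
      exact congrFun hcontra k
    obtain ⟨j, -, hj⟩ := Finset.exists_max_image Finset.univ (fun k => |v k|) Finset.univ_nonempty
    have hvj : 0 < |v j| := by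
      rcases (abs_nonneg (v j)).lt_or_eq with h | h
      · exact h
      · exfalso
        apply hvne
        funext k
        have := hj k (Finset.mem_univ k)
        rw [← h] at this
        exact abs_nonpos_iff.mp this
    have key : |v j| ≤ μ * B * |v j| := by
      conv_lhs => rw [← h2]
      have : |(μ • (W.mulVec v)) j| = μ * |∑ k : L, W j k * v k| := by
        simp only [Pi.smul_apply, smul_eq_mul, abs_mul, abs_of_pos hμpos,
          Matrix.mulVec, dotProduct]
      rw [this, mul_assoc]
      refine mul_le_mul_of_nonneg_left ?_ hμpos.le
      calc |∑ k : L, W j k * v k| ≤ ∑ k : L, |W j k * v k| := Finset.abs_sum_le_sum_abs _ _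
        _ = ∑ k : L, |W j k| * |v k| := by simp [abs_mul]
        _ ≤ ∑ k : L, |W j k| * |v j| := Finset.sum_le_sum fun k _ =>
            mul_le_mul_of_nonneg_left (hj k (Finset.mem_univ k)) (abs_nonneg _)
        _ = (∑ k : L, |W j k|) * |v j| := (Finset.sum_mul _ _ _).symm
        _ ≤ B * |v j| := mul_le_mul_of_nonneg_right (hrow j) (abs_nonneg _)
    have h1le : 1 ≤ μ * B := by
      by_contra hcon
      push_neg at hcon
      have := mul_lt_mul_of_pos_right hcon hvj
      rw [one_mul] at this
      linarith
    rw [div_le_iff₀ hB]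
    linarith
  have hfirst : 1 / B ≤ ⨅ i, hRsym.eigenvalues i := le_ciInf hmin
  refine ⟨hfirst, by positivity, ?_⟩
  have : 2 / B = 2 * (1 / B) := by ring
  rw [this]
  exact mul_le_mul_of_nonneg_left hfirst (by norm_num)
end

section
/- Let G=(L,E) be a finite graph with sphere bound |S_r(i)| ≤ c·r^{d-1} for all i and r≥1, and ball bound v_{d,r} = sup_i |B_r(i)|. For I ⊆ L, define the surface area s(I) as the number of edges with one endpoint in I and one in L∖I, the outer boundary ∂I = {j ∈ L∖I : ∃i∈I, dist(i,j)=1}, and N_r = #{(i,j) ∈ I × (L∖I) : dist(i,j)=r}. Then for every r ≥ 1, N_r ≤ c²·r^{2d-1}·s(I). -/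
open Finset

section Aux
variable {L : Type*} [Fintype L] [DecidableEq L]

private noncomputable def XS (G : SimpleGraph L) (I : Finset L) (q : L) (b : ℕ) : ℕ :=
  (I.filter (fun v => G.dist q v = b)).card

private noncomputable def YS (G : SimpleGraph L) (I : Finset L) (q : L) (b : ℕ) : ℕ :=
  (Iᶜ.filter (fun v => G.dist q v = b)).card

private noncomputable def FF (G : SimpleGraph L) (I : Finset L) (r : ℕ) (q : L) (k : ℕ) :
    Finset (L × L) :=
  ((I ×ˢ Iᶜ).filter fun p : L × L => G.dist p.1 p.2 = r).filter
    (fun pr => G.dist q pr.1 = k ∧ G.dist q pr.2 = r - k)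

private noncomputable def sel (G : SimpleGraph L) (I : Finset L) (r : ℕ) (q : L) (k : ℕ) : ℝ :=
  if 2*k < r then (YS G I q (r-k) : ℝ)
  else if 2*k = r then ((XS G I q k : ℝ) + (YS G I q k : ℝ))/2
  else if k < r then (XS G I q k : ℝ)
  else (YS G I q 0 : ℝ)

private lemma crossing_lemma (G : SimpleGraph L) (hG : G.Connected) (I : Finset L) :
    ∀ (r : ℕ) (i j : L), G.dist i j = r → i ∈ I → j ∉ I →
      ∃ (q : L) (k : ℕ), q ∉ I ∧ (∃ p, p ∈ I ∧ G.Adj q p) ∧ 1 ≤ k ∧ k ≤ r ∧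
        G.dist i q = k ∧ G.dist q j = r - k := by
  intro r
  induction r with
  | zero =>
    intro i j hd hi hj
    exact absurd (by rwa [(hG.dist_eq_zero_iff).mp hd] at hi) hj
  | succ n ih =>
    intro i j hd hi hj
    obtain ⟨w, hw⟩ := (hG.preconnected i j).exists_walk_length_eq_dist
    cases w with
    | nil => rw [hd] at hw; simp at hw
    | @cons _ x _ h w' =>
      have hix : G.dist i x = 1 := SimpleGraph.dist_eq_one_iff_adj.mpr h
      have hxj : G.dist x j = n := by
        have h1 : G.dist x j ≤ w'.length := SimpleGraph.dist_le w'
        have h2 : w'.length + 1 = n + 1 := by simpa [hd] using hw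
        have h3 : G.dist i j ≤ G.dist i x + G.dist x j := hG.dist_triangle
        omega
      by_cases hx : x ∈ I
      · obtain ⟨q, k, hq, hpq, hk1, hkn, hxq, hqj⟩ := ih x j hxj hx hj
        refine ⟨q, k + 1, hq, hpq, by omega, by omega, ?_, by omega⟩
        have hup : G.dist i q ≤ k + 1 := by
          have := hG.dist_triangle (u := i) (v := x) (w := q)
          omega
        have hlow : G.dist i j ≤ G.dist i q + G.dist q j := hG.dist_triangle
        omega
      · exact ⟨x, 1, hx, ⟨i, hi, h.symm⟩, le_rfl, by omega, hix, by
          rw [SimpleGraph.dist_comm] at hxj ⊢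
          omega⟩

end Aux

/-- On a finite connected graph with sphere bound `|S_r(i)| ≤ c r^{d-1}`, for
any `I ⊆ L` with surface area `s(I)` (number of edges between `I` and its complement) and
`N_r = #{(i,j) ∈ I × (L∖I) : dist(i,j) = r}`, one has `N_r ≤ c² r^{2d-1} s(I)` for all
`r ≥ 1`. -/
theorem pairs_at_distance_bound {L : Type*} [Fintype L] [DecidableEq L]
    (G : SimpleGraph L) (hG : G.Connected)
    (c d : ℝ) (hc : 0 < c) (hd : 0 < d)
    (hsphere : ∀ i : L, ∀ r : ℕ, 1 ≤ r →
      ((Finset.univ.filter fun l : L => G.dist i l = r).card : ℝ) ≤ c * (r : ℝ) ^ (d - 1))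
    (I : Finset L) :
    ∀ r : ℕ, 1 ≤ r →
      ((((I ×ˢ Iᶜ).filter fun p : L × L => G.dist p.1 p.2 = r).card : ℝ)) ≤
        c ^ 2 * (r : ℝ) ^ (2 * d - 1) *
          (((Iᶜ ×ˢ I).filter fun p : L × L => G.dist p.1 p.2 = 1).card : ℝ) := by
  intro r hr
  by_cases hPn : ((I ×ˢ Iᶜ).filter fun p : L × L => G.dist p.1 p.2 = r).Nonempty
  case neg =>
    rw [Finset.not_nonempty_iff_eq_empty] at hPn
    rw [hPn]
    simp only [Finset.card_empty, Nat.cast_zero]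
    positivity
  obtain ⟨⟨i0, j0⟩, hij0⟩ := hPn
  simp only [Finset.mem_filter, Finset.mem_product, Finset.mem_compl] at hij0
  obtain ⟨⟨hi0, hj0⟩, hd0⟩ := hij0
  have hrR : (1:ℝ) ≤ (r:ℝ) := by exact_mod_cast hr
  have hRpos : (0:ℝ) < (r:ℝ) := by linarith
  have hcr : (1:ℝ) ≤ c * (r:ℝ) ^ (d - 1) := by
    have hmem : j0 ∈ Finset.univ.filter (fun l : L => G.dist i0 l = r) := by simp [hd0]
    have h1 : (1:ℕ) ≤ (Finset.univ.filter (fun l : L => G.dist i0 l = r)).card :=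
      Finset.card_pos.mpr ⟨j0, hmem⟩
    have h1' : (1:ℝ) ≤ ((Finset.univ.filter (fun l : L => G.dist i0 l = r)).card : ℝ) := by
      exact_mod_cast h1
    exact h1'.trans (hsphere i0 r hr)
  have hcRnn : (0:ℝ) ≤ c * (r:ℝ) ^ (d - 1) := by linarith
  -- sphere splitting
  have hXY : ∀ (q : L) (b : ℕ), 1 ≤ b →
      (XS G I q b : ℝ) + (YS G I q b : ℝ) ≤ c * (b:ℝ) ^ (d - 1) := by
    intro q b hb
    have hdisj : Disjoint (I.filter (fun v => G.dist q v = b))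
        (Iᶜ.filter (fun v => G.dist q v = b)) :=
      Finset.disjoint_filter_filter disjoint_compl_right
    have hunion : I.filter (fun v => G.dist q v = b) ∪ Iᶜ.filter (fun v => G.dist q v = b)
        = Finset.univ.filter (fun v => G.dist q v = b) := by
      rw [← Finset.filter_union, Finset.union_compl]
    have hcard : XS G I q b + YS G I q b
        = (Finset.univ.filter (fun v : L => G.dist q v = b)).card := by
      rw [XS, YS, ← Finset.card_union_of_disjoint hdisj, hunion]
    have := hsphere q b hb
    have hc2 : ((XS G I q b + YS G I q b : ℕ) : ℝ)
        ≤ c * (b:ℝ) ^ (d - 1) := by rw [hcard]; exact this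
    push_cast at hc2
    linarith
  have hY0 : ∀ q : L, (YS G I q 0 : ℝ) ≤ 1 := by
    intro q
    have hsub : Iᶜ.filter (fun v => G.dist q v = 0) ⊆ {q} := by
      intro v hv
      simp only [Finset.mem_filter] at hv
      have := (hG.dist_eq_zero_iff).mp hv.2
      simp [this.symm]
    have h1 := Finset.card_le_card hsub
    simp only [Finset.card_singleton] at h1
    rw [YS]
    exact_mod_cast h1
  -- counting bounds
  have bndA : ∀ (q : L) (k : ℕ),
      ((FF G I r q k).card : ℝ) ≤ (XS G I q k : ℝ) * (c * (r:ℝ) ^ (d - 1)) := by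
    intro q k
    have hsub : FF G I r q k ⊆ (I.filter (fun v => G.dist q v = k)).biUnion
        (fun i => (Finset.univ.filter (fun j : L => G.dist i j = r)).image (fun j => (i, j))) := by
      rintro ⟨a, b⟩ hab
      simp only [FF, Finset.mem_filter, Finset.mem_product, Finset.mem_compl] at hab
      obtain ⟨⟨⟨haI, hbI⟩, hdab⟩, hqa, hqb⟩ := hab
      simp only [Finset.mem_biUnion, Finset.mem_filter, Finset.mem_image, Finset.mem_univ,
        true_and]
      exact ⟨a, ⟨haI, hqa⟩, b, hdab, rfl⟩
    have h1 : (FF G I r q k).card ≤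
        ∑ i ∈ I.filter (fun v => G.dist q v = k),
          ((Finset.univ.filter (fun j : L => G.dist i j = r)).image (fun j => (i, j))).card :=
      (Finset.card_le_card hsub).trans Finset.card_biUnion_le
    have h2 : (FF G I r q k).card ≤
        ∑ i ∈ I.filter (fun v => G.dist q v = k),
          (Finset.univ.filter (fun j : L => G.dist i j = r)).card :=
      h1.trans (Finset.sum_le_sum fun i _ => Finset.card_image_le)
    have h3 : ((FF G I r q k).card : ℝ) ≤
        ∑ i ∈ I.filter (fun v => G.dist q v = k),
          ((Finset.univ.filter (fun j : L => G.dist i j = r)).card : ℝ) := by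
      exact_mod_cast h2
    refine h3.trans ?_
    calc ∑ i ∈ I.filter (fun v => G.dist q v = k),
          ((Finset.univ.filter (fun j : L => G.dist i j = r)).card : ℝ)
        ≤ ∑ _i ∈ I.filter (fun v => G.dist q v = k), c * (r:ℝ) ^ (d - 1) :=
          Finset.sum_le_sum fun i _ => hsphere i r hr
      _ = (XS G I q k : ℝ) * (c * (r:ℝ) ^ (d - 1)) := by
          rw [Finset.sum_const, nsmul_eq_mul, XS]
  have bndB : ∀ (q : L) (k : ℕ),
      ((FF G I r q k).card : ℝ) ≤ (YS G I q (r - k) : ℝ) * (c * (r:ℝ) ^ (d - 1)) := by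
    intro q k
    have hsub : FF G I r q k ⊆ (Iᶜ.filter (fun v => G.dist q v = r - k)).biUnion
        (fun j => (Finset.univ.filter (fun i : L => G.dist j i = r)).image (fun i => (i, j))) := by
      rintro ⟨a, b⟩ hab
      simp only [FF, Finset.mem_filter, Finset.mem_product] at hab
      obtain ⟨⟨⟨haI, hbI⟩, hdab⟩, hqa, hqb⟩ := hab
      simp only [Finset.mem_biUnion, Finset.mem_filter, Finset.mem_image, Finset.mem_univ,
        true_and]
      exact ⟨b, ⟨hbI, hqb⟩, a, by rwa [SimpleGraph.dist_comm], rfl⟩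
    have h2 : (FF G I r q k).card ≤
        ∑ j ∈ Iᶜ.filter (fun v => G.dist q v = r - k),
          (Finset.univ.filter (fun i : L => G.dist j i = r)).card :=
      ((Finset.card_le_card hsub).trans Finset.card_biUnion_le).trans
        (Finset.sum_le_sum fun j _ => Finset.card_image_le)
    have h3 : ((FF G I r q k).card : ℝ) ≤
        ∑ j ∈ Iᶜ.filter (fun v => G.dist q v = r - k),
          ((Finset.univ.filter (fun i : L => G.dist j i = r)).card : ℝ) := by
      exact_mod_cast h2
    refine h3.trans ?_
    calc ∑ j ∈ Iᶜ.filter (fun v => G.dist q v = r - k),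
          ((Finset.univ.filter (fun i : L => G.dist j i = r)).card : ℝ)
        ≤ ∑ _j ∈ Iᶜ.filter (fun v => G.dist q v = r - k), c * (r:ℝ) ^ (d - 1) :=
          Finset.sum_le_sum fun j _ => hsphere j r hr
      _ = (YS G I q (r - k) : ℝ) * (c * (r:ℝ) ^ (d - 1)) := by
          rw [Finset.sum_const, nsmul_eq_mul, YS]
  -- selected bound
  have hsel : ∀ (q : L) (k : ℕ), 1 ≤ k → k ≤ r →
      ((FF G I r q k).card : ℝ) ≤ sel G I r q k * (c * (r:ℝ) ^ (d - 1)) := by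
    intro q k hk1 hkr
    by_cases h1 : 2*k < r
    · rw [sel, if_pos h1]; exact bndB q k
    · by_cases h2 : 2*k = r
      · have hrk : r - k = k := by omega
        have hbB := bndB q k
        rw [hrk] at hbB
        have hbA := bndA q k
        rw [sel, if_neg h1, if_pos h2]
        nlinarith [hbA, hbB]
      · by_cases h3 : k < r
        · rw [sel, if_neg h1, if_neg h2, if_pos h3]; exact bndA q k
        · have hkr' : k = r := by omega
          subst hkr'
          rw [sel, if_neg h1, if_neg h2, if_neg h3]
          have hb := bndB q k
          rw [Nat.sub_self] at hb
          exact hb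
  -- decomposition over boundary edges
  have hsubP : ((I ×ˢ Iᶜ).filter fun p : L × L => G.dist p.1 p.2 = r) ⊆
      ((Iᶜ ×ˢ I).filter fun p : L × L => G.dist p.1 p.2 = 1).biUnion
        (fun e => (Finset.range r).biUnion (fun k' => FF G I r e.1 (k' + 1))) := by
    rintro ⟨a, b⟩ hab
    have hab' := hab
    simp only [Finset.mem_filter, Finset.mem_product, Finset.mem_compl] at hab'
    obtain ⟨⟨haI, hbI⟩, hdab⟩ := hab'
    obtain ⟨q0, k, hq0, ⟨p0, hp0, hadj⟩, hk1, hkr, hiq, hqj⟩ :=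
      crossing_lemma G hG I r a b hdab haI hbI
    refine Finset.mem_biUnion.mpr ⟨(q0, p0), ?_, Finset.mem_biUnion.mpr ⟨k - 1, ?_, ?_⟩⟩
    · simp only [Finset.mem_filter, Finset.mem_product, Finset.mem_compl]
      exact ⟨⟨hq0, hp0⟩, SimpleGraph.dist_eq_one_iff_adj.mpr hadj⟩
    · exact Finset.mem_range.mpr (by omega)
    · have hk' : k - 1 + 1 = k := by omega
      rw [hk', FF, Finset.mem_filter]
      exact ⟨hab, by rw [SimpleGraph.dist_comm]; exact hiq, hqj⟩
  have hchain : (((I ×ˢ Iᶜ).filter fun p : L × L => G.dist p.1 p.2 = r).card : ℝ)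
      ≤ ∑ e ∈ (Iᶜ ×ˢ I).filter (fun p : L × L => G.dist p.1 p.2 = 1),
          ∑ k' ∈ Finset.range r, ((FF G I r e.1 (k'+1)).card : ℝ) := by
    have h1 : (((I ×ˢ Iᶜ).filter fun p : L × L => G.dist p.1 p.2 = r)).card
        ≤ ∑ e ∈ (Iᶜ ×ˢ I).filter (fun p : L × L => G.dist p.1 p.2 = 1),
            ∑ k' ∈ Finset.range r, (FF G I r e.1 (k'+1)).card :=
      (Finset.card_le_card hsubP).trans (Finset.card_biUnion_le.trans
        (Finset.sum_le_sum fun e _ => Finset.card_biUnion_le))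
    calc (((I ×ˢ Iᶜ).filter fun p : L × L => G.dist p.1 p.2 = r).card : ℝ)
        ≤ ((∑ e ∈ (Iᶜ ×ˢ I).filter (fun p : L × L => G.dist p.1 p.2 = 1),
            ∑ k' ∈ Finset.range r, (FF G I r e.1 (k'+1)).card : ℕ) : ℝ) := by exact_mod_cast h1
      _ = _ := by push_cast; rfl
  -- M₀
  obtain ⟨M₀, hM0nn, hMb, hMmid, hMfin⟩ :
      ∃ M₀ : ℝ, 0 ≤ M₀ ∧ (∀ b : ℕ, r < 2*b → b ≤ r → ((b:ℝ)) ^ (d-1) ≤ M₀) ∧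
        (∀ b : ℕ, 2*b = r → ((b:ℝ)) ^ (d-1) ≤ M₀) ∧
        (1 + c * M₀ * (((r:ℝ) - 1)/2)) * (c * (r:ℝ) ^ (d-1)) ≤ c^2 * (r:ℝ) ^ (2*d-1) := by
    have h2d : (r:ℝ) ^ (2*d-1) = (r:ℝ) ^ (d-1) * (r:ℝ) ^ (d-1) * (r:ℝ) := by
      rw [show 2*d - 1 = (d-1) + ((d-1) + 1) by ring, Real.rpow_add hRpos,
        Real.rpow_add hRpos, Real.rpow_one]
      ring
    rcases le_or_gt d 1 with hd1 | hd1
    · refine ⟨((r:ℝ)/2) ^ (d-1), Real.rpow_nonneg (by linarith) _, ?_, ?_, ?_⟩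
      · intro b hb hbr
        have hbR : (r:ℝ)/2 ≤ (b:ℝ) := by
          have : (r:ℝ) < 2*(b:ℝ) := by exact_mod_cast hb
          linarith
        exact Real.rpow_le_rpow_of_nonpos (by linarith) hbR (by linarith)
      · intro b hb
        have hbR : ((b:ℝ)) = (r:ℝ)/2 := by
          have h' := congrArg (Nat.cast : ℕ → ℝ) hb
          push_cast at h'
          linarith
        rw [hbR]
      · -- arithmetic for d ≤ 1
        set u := (r:ℝ) ^ (d-1) with hu
        set v := ((r:ℝ)/2) ^ (d-1) with hv
        set σ := (2:ℝ) ^ (d-1) with hσ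
        set τ := (2:ℝ) ^ (1-d) with hτ
        have hvσ : v * σ = u := by
          rw [hv, hσ, hu, ← Real.mul_rpow (by linarith) (by norm_num)]
          norm_num
        have hστ : σ * τ = 1 := by
          rw [hσ, hτ, ← Real.rpow_add (by norm_num)]
          norm_num
        have hvuτ : v = u * τ := by
          calc v = v * (σ * τ) := by rw [hστ, mul_one]
            _ = (v * σ) * τ := by ring
            _ = u * τ := by rw [hvσ]
        have hτ2 : τ ≤ 2 := by
          rw [hτ]
          calc (2:ℝ) ^ (1-d) ≤ (2:ℝ) ^ (1:ℝ) :=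
              Real.rpow_le_rpow_of_exponent_le (by norm_num) (by linarith)
            _ = 2 := Real.rpow_one 2
        have hτ0 : 0 ≤ τ := Real.rpow_nonneg (by norm_num) _
        have hupos : 0 < u := Real.rpow_pos_of_pos hRpos _
        rw [h2d, hvuτ]
        have hw1 : 1 ≤ c * u := hcr
        nlinarith [mul_nonneg (mul_nonneg (mul_nonneg (mul_nonneg hcRnn hcRnn)
            (by linarith : (0:ℝ) ≤ (r:ℝ) - 1)) (by linarith : (0:ℝ) ≤ 2 - τ)) (le_of_lt hRpos),
          mul_nonneg (mul_nonneg (mul_nonneg hcRnn hcRnn)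
            (by linarith : (0:ℝ) ≤ (r:ℝ) - 1)) (by linarith : (0:ℝ) ≤ 2 - τ),
          mul_nonneg (by linarith : (0:ℝ) ≤ c * u - 1) (by linarith : (0:ℝ) ≤ c * u)]
    · refine ⟨(r:ℝ) ^ (d-1), Real.rpow_nonneg (by linarith) _, ?_, ?_, ?_⟩
      · intro b hb hbr
        exact Real.rpow_le_rpow (Nat.cast_nonneg b) (by exact_mod_cast hbr) (by linarith)
      · intro b hb
        have hbr : (b:ℝ) ≤ (r:ℝ) := by
          have : b ≤ r := by omega
          exact_mod_cast this
        exact Real.rpow_le_rpow (Nat.cast_nonneg b) hbr (by linarith)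
      · -- arithmetic for d > 1
        rw [h2d]
        have hrw : c^2 * ((r:ℝ)^(d-1) * (r:ℝ)^(d-1) * (r:ℝ))
            = (c * (r:ℝ)^(d-1)) * (c * (r:ℝ)^(d-1)) * (r:ℝ) := by ring
        rw [hrw]
        set w := c * (r:ℝ) ^ (d-1) with hw
        nlinarith [hcr, hrR,
          mul_nonneg (mul_nonneg (by linarith : (0:ℝ) ≤ w - 1) (by linarith : (0:ℝ) ≤ w))
            (by linarith : (0:ℝ) ≤ (r:ℝ) - 1),
          mul_nonneg (by linarith : (0:ℝ) ≤ w - 1) (by linarith : (0:ℝ) ≤ w)]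
  -- per-vertex sum of selected bounds
  have hSig : ∀ q : L, ∑ k' ∈ Finset.range r, sel G I r q (k'+1)
      ≤ 1 + c * M₀ * (((r:ℝ) - 1)/2) := by
    intro q
    have hIcc : ∑ k ∈ Finset.Icc 1 r, sel G I r q k
        = ∑ k' ∈ Finset.range r, sel G I r q (k'+1) := by
      refine Finset.sum_nbij' (i := fun k => k - 1) (j := fun k' => k' + 1) ?_ ?_ ?_ ?_ ?_
      · intro a ha
        simp only [Finset.mem_Icc] at ha
        simp only [Finset.mem_range]
        omega
      · intro a ha
        simp only [Finset.mem_range] at ha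
        simp only [Finset.mem_Icc]
        omega
      · intro a ha
        simp only [Finset.mem_Icc] at ha
        omega
      · intro a _
        omega
      · intro a ha
        simp only [Finset.mem_Icc] at ha
        have h' : a - 1 + 1 = a := by omega
        rw [h']
    rw [← hIcc]
    have hnotmem : r ∉ Finset.Icc 1 (r-1) := by
      simp only [Finset.mem_Icc]
      omega
    have hins : Finset.Icc 1 r = insert r (Finset.Icc 1 (r-1)) := by
      ext x
      simp only [Finset.mem_Icc, Finset.mem_insert]
      omega
    rw [hins, Finset.sum_insert hnotmem]
    have hselr : sel G I r q r = (YS G I q 0 : ℝ) := by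
      rw [sel, if_neg (by omega), if_neg (by omega), if_neg (lt_irrefl r)]
    -- split the remaining sum
    set S' := Finset.Icc 1 (r-1) with hS'
    have hsplit1 : ∑ k ∈ S', sel G I r q k
        = ∑ k ∈ S'.filter (fun k => 2*k < r), sel G I r q k + ∑ k ∈ S'.filter (fun k => ¬ 2*k < r), sel G I r q k :=
      (Finset.sum_filter_add_sum_filter_not S' (fun k => 2*k < r) _).symm
    have hsplit2 : ∑ k ∈ S'.filter (fun k => ¬ 2*k < r), sel G I r q k
        = ∑ k ∈ (S'.filter (fun k => ¬ 2*k < r)).filter (fun k => 2*k = r), sel G I r q k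
          + ∑ k ∈ (S'.filter (fun k => ¬ 2*k < r)).filter (fun k => ¬ 2*k = r), sel G I r q k :=
      (Finset.sum_filter_add_sum_filter_not _ (fun k => 2*k = r) _).symm
    have hMset : (S'.filter (fun k => ¬ 2*k < r)).filter (fun k => 2*k = r) = S'.filter (fun k => 2*k = r) := by
      ext x
      simp only [Finset.mem_filter, hS', Finset.mem_Icc]
      omega
    have hA2set : (S'.filter (fun k => ¬ 2*k < r)).filter (fun k => ¬ 2*k = r)
        = S'.filter (fun k => r < 2*k) := by
      ext x
      simp only [Finset.mem_filter, hS', Finset.mem_Icc]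
      omega
    have hval1 : ∑ k ∈ S'.filter (fun k => 2*k < r), sel G I r q k
        = ∑ k ∈ S'.filter (fun k => 2*k < r), (YS G I q (r-k) : ℝ) := by
      refine Finset.sum_congr rfl fun k hk => ?_
      simp only [Finset.mem_filter] at hk
      rw [sel, if_pos hk.2]
    have hval2 : ∑ k ∈ S'.filter (fun k => 2*k = r), sel G I r q k
        = ∑ k ∈ S'.filter (fun k => 2*k = r), ((XS G I q k : ℝ) + (YS G I q k : ℝ))/2 := by
      refine Finset.sum_congr rfl fun k hk => ?_
      simp only [Finset.mem_filter] at hk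
      rw [sel, if_neg (by omega), if_pos hk.2]
    have hval3 : ∑ k ∈ S'.filter (fun k => r < 2*k), sel G I r q k
        = ∑ k ∈ S'.filter (fun k => r < 2*k), (XS G I q k : ℝ) := by
      refine Finset.sum_congr rfl fun k hk => ?_
      simp only [Finset.mem_filter, hS', Finset.mem_Icc] at hk
      rw [sel, if_neg (by omega), if_neg (by omega), if_pos (by omega)]
    -- reindex the A1 part
    have hreindex : ∑ k ∈ S'.filter (fun k => 2*k < r), (YS G I q (r-k) : ℝ)
        = ∑ b ∈ S'.filter (fun k => r < 2*k), (YS G I q b : ℝ) := by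
      refine Finset.sum_nbij' (i := fun k => r - k) (j := fun b => r - b) ?_ ?_ ?_ ?_ ?_
      · intro a ha
        simp only [Finset.mem_filter, hS', Finset.mem_Icc] at ha ⊢
        omega
      · intro a ha
        simp only [Finset.mem_filter, hS', Finset.mem_Icc] at ha ⊢
        omega
      · intro a ha
        simp only [Finset.mem_filter, hS', Finset.mem_Icc] at ha
        omega
      · intro a ha
        simp only [Finset.mem_filter, hS', Finset.mem_Icc] at ha
        omega
      · intro a _
        rfl
    -- cardinality facts
    have hcardA1A2 : (S'.filter (fun k => r < 2*k)).card ≤ (S'.filter (fun k => 2*k < r)).card := by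
      refine Finset.card_le_card_of_injOn (fun b => r - b) ?_ ?_
      · intro a ha
        simp only [Finset.mem_coe, Finset.mem_filter, hS', Finset.mem_Icc] at ha ⊢
        omega
      · intro a ha b hb hab
        simp only [Finset.mem_coe, Finset.mem_filter, hS', Finset.mem_Icc] at ha hb
        dsimp only at hab
        omega
    have hcardpart1 : (S'.filter (fun k => 2*k < r)).card + (S'.filter (fun k => ¬ 2*k < r)).card = S'.card :=
      Finset.card_filter_add_card_filter_not _
    have hcardpart2 : ((S'.filter (fun k => ¬ 2*k < r)).filter (fun k => 2*k = r)).card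
        + ((S'.filter (fun k => ¬ 2*k < r)).filter (fun k => ¬ 2*k = r)).card
        = (S'.filter (fun k => ¬ 2*k < r)).card :=
      Finset.card_filter_add_card_filter_not _
    have hScard : S'.card = r - 1 := by
      rw [hS', Nat.card_Icc]
      omega
    have hcards : 2 * (S'.filter (fun k => r < 2*k)).card + (S'.filter (fun k => 2*k = r)).card ≤ r - 1 := by
      rw [hMset, hA2set] at hcardpart2
      omega
    -- real bounds
    have hcM0 : (0:ℝ) ≤ c * M₀ := mul_nonneg hc.le hM0nn
    have hbndA2 : ∑ b ∈ S'.filter (fun k => r < 2*k), ((XS G I q b : ℝ) + (YS G I q b : ℝ))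
        ≤ ((S'.filter (fun k => r < 2*k)).card : ℝ) * (c * M₀) := by
      have h := Finset.sum_le_card_nsmul (S'.filter (fun k => r < 2*k))
        (fun b => (XS G I q b : ℝ) + (YS G I q b : ℝ)) (c * M₀) ?_
      · rw [nsmul_eq_mul] at h
        exact h
      intro b hb
      simp only [Finset.mem_filter, hS', Finset.mem_Icc] at hb
      calc (XS G I q b : ℝ) + (YS G I q b : ℝ) ≤ c * (b:ℝ) ^ (d-1) := hXY q b (by omega)
        _ ≤ c * M₀ := mul_le_mul_of_nonneg_left (hMb b (by omega) (by omega)) hc.le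
    have hbndM : ∑ b ∈ S'.filter (fun k => 2*k = r), ((XS G I q b : ℝ) + (YS G I q b : ℝ))/2
        ≤ ((S'.filter (fun k => 2*k = r)).card : ℝ) * (c * M₀ / 2) := by
      have h := Finset.sum_le_card_nsmul (S'.filter (fun k => 2*k = r))
        (fun b => ((XS G I q b : ℝ) + (YS G I q b : ℝ))/2) (c * M₀ / 2) ?_
      · rw [nsmul_eq_mul] at h
        exact h
      intro b hb
      simp only [Finset.mem_filter, hS', Finset.mem_Icc] at hb
      have h1 : (XS G I q b : ℝ) + (YS G I q b : ℝ) ≤ c * M₀ := by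
        calc (XS G I q b : ℝ) + (YS G I q b : ℝ) ≤ c * (b:ℝ) ^ (d-1) := hXY q b (by omega)
          _ ≤ c * M₀ := mul_le_mul_of_nonneg_left (hMmid b (by omega)) hc.le
      linarith
    -- cast the cardinality bound
    have hcardsR : 2 * ((S'.filter (fun k => r < 2*k)).card : ℝ)
        + ((S'.filter (fun k => 2*k = r)).card : ℝ) ≤ (r:ℝ) - 1 := by
      have h1 : ((2 * (S'.filter (fun k => r < 2*k)).card
          + (S'.filter (fun k => 2*k = r)).card : ℕ) : ℝ) ≤ ((r - 1 : ℕ) : ℝ) := by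
        exact_mod_cast hcards
      have h2 : ((r - 1 : ℕ) : ℝ) = (r:ℝ) - 1 := by
        rw [Nat.cast_sub hr]
        norm_num
      rw [h2] at h1
      push_cast at h1
      linarith
    -- put everything together
    have hY0q := hY0 q
    have hsum2 : ∑ b ∈ S'.filter (fun k => r < 2*k), (YS G I q b : ℝ)
        + ∑ b ∈ S'.filter (fun k => r < 2*k), (XS G I q b : ℝ)
        = ∑ b ∈ S'.filter (fun k => r < 2*k), ((XS G I q b : ℝ) + (YS G I q b : ℝ)) := by
      rw [← Finset.sum_add_distrib]
      exact Finset.sum_congr rfl fun b _ => by ring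
    have hfin : ((S'.filter (fun k => r < 2*k)).card : ℝ) * (c * M₀)
        + ((S'.filter (fun k => 2*k = r)).card : ℝ) * (c * M₀ / 2)
        ≤ c * M₀ * (((r:ℝ) - 1)/2) := by
      have hle : ((S'.filter (fun k => r < 2*k)).card : ℝ)
          + ((S'.filter (fun k => 2*k = r)).card : ℝ)/2 ≤ (((r:ℝ) - 1)/2) := by
        linarith
      calc ((S'.filter (fun k => r < 2*k)).card : ℝ) * (c * M₀)
            + ((S'.filter (fun k => 2*k = r)).card : ℝ) * (c * M₀ / 2)
          = (c * M₀) * (((S'.filter (fun k => r < 2*k)).card : ℝ)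
            + ((S'.filter (fun k => 2*k = r)).card : ℝ)/2) := by ring
        _ ≤ (c * M₀) * (((r:ℝ) - 1)/2) := mul_le_mul_of_nonneg_left hle hcM0
        _ = c * M₀ * (((r:ℝ) - 1)/2) := by ring
    have etotal : ∑ k ∈ S', sel G I r q k
        = ∑ b ∈ S'.filter (fun k => r < 2*k), ((XS G I q b : ℝ) + (YS G I q b : ℝ))
          + ∑ b ∈ S'.filter (fun k => 2*k = r), ((XS G I q b : ℝ) + (YS G I q b : ℝ))/2 := by
      rw [hsplit1, hsplit2, hMset, hA2set, hval1, hval2, hval3, hreindex, ← hsum2]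
      ring
    rw [hselr, etotal]
    linarith [hbndA2, hbndM, hfin, hY0q]
  -- final assembly
  calc (((I ×ˢ Iᶜ).filter fun p : L × L => G.dist p.1 p.2 = r).card : ℝ)
      ≤ ∑ e ∈ (Iᶜ ×ˢ I).filter (fun p : L × L => G.dist p.1 p.2 = 1),
          ∑ k' ∈ Finset.range r, ((FF G I r e.1 (k'+1)).card : ℝ) := hchain
    _ ≤ ∑ _e ∈ (Iᶜ ×ˢ I).filter (fun p : L × L => G.dist p.1 p.2 = 1),
          c ^ 2 * (r:ℝ) ^ (2*d-1) := by
        refine Finset.sum_le_sum fun e _ => ?_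
        calc ∑ k' ∈ Finset.range r, ((FF G I r e.1 (k'+1)).card : ℝ)
            ≤ ∑ k' ∈ Finset.range r, sel G I r e.1 (k'+1) * (c * (r:ℝ) ^ (d-1)) := by
              refine Finset.sum_le_sum fun k' hk' => ?_
              simp only [Finset.mem_range] at hk'
              exact hsel e.1 (k'+1) (by omega) (by omega)
          _ = (∑ k' ∈ Finset.range r, sel G I r e.1 (k'+1)) * (c * (r:ℝ) ^ (d-1)) :=
              (Finset.sum_mul _ _ _).symm
          _ ≤ (1 + c * M₀ * (((r:ℝ) - 1)/2)) * (c * (r:ℝ) ^ (d-1)) :=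
              mul_le_mul_of_nonneg_right (hSig e.1) hcRnn
          _ ≤ c ^ 2 * (r:ℝ) ^ (2*d-1) := hMfin
    _ = c ^ 2 * (r:ℝ) ^ (2*d-1)
          * (((Iᶜ ×ˢ I).filter fun p : L × L => G.dist p.1 p.2 = 1).card : ℝ) := by
        rw [Finset.sum_const, nsmul_eq_mul]
        ring
end
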